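/- (Fundamental prox-gradient inequality.) Let l : E → ℝ be convex and differentiable with L-Lipschitz gradient, let h : E → (−∞, ∞] be a proper closed convex function, let F = l + h, and let M ≥ L with M > 0. Fix x ∈ E and suppose T minimizes y ↦ h(y) + (M/2)‖y − (x − (1/M)∇l(x))‖²; set G = M(x − T). Then for every y in the domain of h: F(T) − F(y) ≤ ⟨G, x − y⟩ − (1/(2M))‖G‖², and consequently F(T) − F(y) ≤ ‖G‖·‖x − y‖. -/

import Mathlib

/-!
Three one-sided estimates add up to the inequality. At `x`, the convex function `l` lies above its
tangent plane; at `T`, the descent lemma bounds `l` above by its linearisation at `x` plus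
`(M/2)‖T - x‖²`; and the optimality of `T` in the prox problem says that `G - ∇l(x)` is a
subgradient of `h` at `T`. Summing, the linear terms in `∇l(x)` cancel and what remains is
`⟪G, x - y⟫ - ‖G‖² / (2M)`; Cauchy–Schwarz gives the second inequality.
-/

open scoped RealInnerProductSpace
open Set Filter Topology

theorem EReal.exists_coe_of_add_coe_le_add_coe {A B : EReal} {c d : ℝ}
    (h : A + c ≤ B + d) (hA : A ≠ ⊥) (hB : B ≠ ⊤) : ∃ a b : ℝ, A = a ∧ B = b := by
  induction A using EReal.rec <;> induction B using EReal.rec <;> simp_all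
  exact EReal.add_ne_top (EReal.coe_ne_top _) (EReal.coe_ne_top _) h

section

variable {E : Type*} [NormedAddCommGroup E] [InnerProductSpace ℝ E]

/-- Comparing `T` with the points `T + t • (y - T)` of the segment and letting `t → 0⁺`. -/
theorem le_add_mul_inner_of_prox_minimizer {h : E → EReal}
    (hconvex : ∀ x y : E, ∀ t : ℝ, 0 ≤ t → t ≤ 1 →
      h (t • x + (1 - t) • y) ≤ (t : EReal) * h x + ((1 - t : ℝ) : EReal) * h y)
    {M : ℝ} {u T : E}
    (hT : ∀ y : E, h T + ((M / 2 * ‖T - u‖ ^ 2 : ℝ) : EReal)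
      ≤ h y + ((M / 2 * ‖y - u‖ ^ 2 : ℝ) : EReal))
    {y : E} {a b : ℝ} (ha : h T = a) (hb : h y = b) :
    a ≤ b + M * ⟪T - u, y - T⟫ := by
  have hsegment : ∀ t ∈ Ioc (0 : ℝ) 1,
      a ≤ b + M * ⟪T - u, y - T⟫ + M / 2 * ‖y - T‖ ^ 2 * t := by
    rintro t ⟨ht0, ht1⟩
    have hmin := (hT (t • y + (1 - t) • T)).trans (add_le_add_left (hconvex y T t ht0.le ht1) _)
    rw [ha, hb, show t • y + (1 - t) • T - u = (T - u) + t • (y - T) by module] at hmin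
    have hreal : a + M / 2 * ‖T - u‖ ^ 2
        ≤ t * b + (1 - t) * a + M / 2 * ‖(T - u) + t • (y - T)‖ ^ 2 := by
      exact_mod_cast hmin
    rw [norm_add_sq_real, real_inner_smul_right, norm_smul, Real.norm_of_nonneg ht0.le] at hreal
    nlinarith
  refine ge_of_tendsto ?_ (eventually_of_mem (Ioc_mem_nhdsGT one_pos) hsegment)
  exact (Continuous.tendsto' (by fun_prop) 0 _ (by simp)).mono_left nhdsWithin_le_nhds

variable [CompleteSpace E]

theorem hasDerivAt_comp_add_smul {l : E → ℝ} {a v : E} {t : ℝ}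
    (hl : DifferentiableAt ℝ l (a + t • v)) :
    HasDerivAt (fun s : ℝ => l (a + s • v)) ⟪gradient l (a + t • v), v⟫ t := by
  have hline : HasDerivAt (fun s : ℝ => a + s • v) v t := by
    simpa using ((hasDerivAt_id t).smul_const v).const_add a
  simpa [Function.comp_def] using hl.hasGradientAt.hasFDerivAt.comp_hasDerivAt t hline

theorem ConvexOn.add_inner_gradient_le {l : E → ℝ} (hconv : ConvexOn ℝ univ l) {a : E}
    (hl : DifferentiableAt ℝ l a) (b : E) : l a + ⟪gradient l a, b - a⟫ ≤ l b := by
  have hline : ConvexOn ℝ univ fun s : ℝ => l (a + s • (b - a)) := by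
    simpa [Function.comp_def, AffineMap.lineMap_apply, add_comm] using
      hconv.comp_affineMap (AffineMap.lineMap a b)
  have := hline.le_slope_of_hasDerivAt (mem_univ 0) (mem_univ 1) one_pos
    (hasDerivAt_comp_add_smul (by simpa using hl))
  simp only [slope_def_field, zero_smul, one_smul, add_zero, add_sub_cancel, sub_zero,
    div_one] at this
  linarith

theorem le_add_inner_gradient_add_sq_of_lipschitz_gradient {l : E → ℝ}
    (hl : Differentiable ℝ l) {L : ℝ}
    (hLip : ∀ a b : E, ‖gradient l a - gradient l b‖ ≤ L * ‖a - b‖) (a b : E) :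
    l b ≤ l a + ⟪gradient l a, b - a⟫ + L / 2 * ‖b - a‖ ^ 2 := by
  set v := b - a
  set g : ℝ → ℝ := fun t => l (a + t • v) - t * ⟪gradient l a, v⟫ - L / 2 * ‖v‖ ^ 2 * t ^ 2
  have hg : ∀ t, HasDerivAt g
      (⟪gradient l (a + t • v) - gradient l a, v⟫ - L * ‖v‖ ^ 2 * t) t := by
    intro t
    refine (((hasDerivAt_comp_add_smul (a := a) (v := v) (hl _)).sub
      ((hasDerivAt_id t).mul_const ⟪gradient l a, v⟫)).sub
      ((hasDerivAt_pow 2 t).const_mul (L / 2 * ‖v‖ ^ 2))).congr_deriv ?_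
    rw [inner_sub_left]; push_cast; ring
  have hderiv : ∀ t ∈ interior (Icc (0 : ℝ) 1), deriv g t ≤ 0 := by
    intro t ht
    rw [interior_Icc] at ht
    rw [(hg t).deriv, sub_nonpos]
    calc ⟪gradient l (a + t • v) - gradient l a, v⟫
        ≤ ‖gradient l (a + t • v) - gradient l a‖ * ‖v‖ := real_inner_le_norm _ _
      _ ≤ L * ‖a + t • v - a‖ * ‖v‖ := by gcongr; exact hLip _ _
      _ = L * ‖v‖ ^ 2 * t := by
        rw [add_sub_cancel_left, norm_smul, Real.norm_of_nonneg ht.1.le]; ring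
  have hanti := antitoneOn_of_deriv_nonpos (convex_Icc 0 1)
    (HasDerivAt.continuousOn fun t _ => hg t)
    (fun t _ => (hg t).differentiableAt.differentiableWithinAt) hderiv
  have := hanti (left_mem_Icc.2 zero_le_one) (right_mem_Icc.2 zero_le_one) zero_le_one
  simp only [g, v, zero_smul, one_smul, add_zero, add_sub_cancel, zero_mul, one_mul, sub_zero,
    ne_eq, OfNat.ofNat_ne_zero, not_false_eq_true, zero_pow, mul_zero, one_pow, mul_one] at this
  linarith

end

theorem fundamental_prox_gradient_inequality_general
    {E : Type*} [NormedAddCommGroup E] [InnerProductSpace ℝ E] [CompleteSpace E]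
    (l : E → ℝ) (hlconv : ConvexOn ℝ Set.univ l) (hldiff : Differentiable ℝ l)
    (L : ℝ)
    (hLip : ∀ a b : E, ‖gradient l a - gradient l b‖ ≤ L * ‖a - b‖)
    (h : E → EReal)
    (hconvex : ∀ x y : E, ∀ t : ℝ, 0 ≤ t → t ≤ 1 →
      h (t • x + (1 - t) • y) ≤ (t : EReal) * h x + ((1 - t : ℝ) : EReal) * h y)
    (Fn : E → EReal) (hFn : ∀ x : E, Fn x = (l x : EReal) + h x)
    (M : ℝ) (hM : 0 < M) (hML : L ≤ M)
    (x T : E)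
    (hT : ∀ y : E,
      h T + ((M / 2 * ‖T - (x - (1 / M) • gradient l x)‖ ^ 2 : ℝ) : EReal)
        ≤ h y + ((M / 2 * ‖y - (x - (1 / M) • gradient l x)‖ ^ 2 : ℝ) : EReal))
    (G : E) (hG : G = M • (x - T)) :
    ∀ y : E, h y ≠ ⊤ →
      Fn T ≤ Fn y + ((⟪G, x - y⟫ - 1 / (2 * M) * ‖G‖ ^ 2 : ℝ) : EReal) ∧
      Fn T ≤ Fn y + ((‖G‖ * ‖x - y‖ : ℝ) : EReal) := by
  intro y hy
  by_cases hTbot : h T = ⊥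
  · simp [hFn, hTbot]
  obtain ⟨a, b, ha, hb⟩ := EReal.exists_coe_of_add_coe_le_add_coe (hT y) hTbot hy
  set g := gradient l x
  have hprox : a ≤ b + ⟪g - G, y - T⟫ := by
    have hsubgradient : M • (T - (x - (1 / M) • g)) = g - G := by
      rw [smul_sub, smul_sub, smul_smul, mul_one_div_cancel hM.ne', one_smul, hG, smul_sub]
      abel
    simpa only [← real_inner_smul_left, hsubgradient] using
      le_add_mul_inner_of_prox_minimizer hconvex hT ha hb
  have hdescent : l T ≤ l x + ⟪g, T - x⟫ + M / 2 * ‖T - x‖ ^ 2 := by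
    nlinarith [le_add_inner_gradient_add_sq_of_lipschitz_gradient hldiff hLip x T,
      sq_nonneg ‖T - x‖]
  have hsupport : l x + ⟪g, y - x⟫ ≤ l y := hlconv.add_inner_gradient_le (hldiff x) y
  have hlinear : ⟪g, T - x⟫ + ⟪g - G, y - T⟫ = ⟪g, y - x⟫ + ⟪G, T - y⟫ := by
    simp only [inner_sub_left, inner_sub_right]
    ring
  have hquadratic :
      ⟪G, T - y⟫ + M / 2 * ‖T - x‖ ^ 2 = ⟪G, x - y⟫ - 1 / (2 * M) * ‖G‖ ^ 2 := by
    rw [hG, show T - y = (x - y) - (x - T) by abel, norm_sub_rev, inner_sub_right, norm_smul,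
      Real.norm_of_nonneg hM.le]
    simp only [real_inner_smul_left, real_inner_self_eq_norm_sq]
    field_simp
    ring
  have hmain : l T + a ≤ l y + b + (⟪G, x - y⟫ - 1 / (2 * M) * ‖G‖ ^ 2) := by linarith
  have hcauchy : ⟪G, x - y⟫ - 1 / (2 * M) * ‖G‖ ^ 2 ≤ ‖G‖ * ‖x - y‖ := by
    have : 0 ≤ 1 / (2 * M) * ‖G‖ ^ 2 := by positivity
    linarith [real_inner_le_norm G (x - y)]
  rw [hFn, hFn, ha, hb]
  exact ⟨by exact_mod_cast hmain, by exact_mod_cast hmain.trans (by linarith)⟩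

/-- Fundamental prox-gradient inequality: let `l : E → ℝ` be convex and differentiable with
`L`-Lipschitz gradient, `h` a proper closed convex function, `F = l + h`, and `M ≥ L` with
`M > 0`. If `T` minimizes `y ↦ h(y) + (M/2)‖y − (x − (1/M)∇l(x))‖²` and `G = M(x − T)`,
then for every `y` in the domain of `h`:
`F(T) − F(y) ≤ ⟨G, x − y⟩ − (1/(2M))‖G‖²` and consequently `F(T) − F(y) ≤ ‖G‖·‖x − y‖`. -/
theorem fundamental_prox_gradient_inequality
    {E : Type*} [NormedAddCommGroup E] [InnerProductSpace ℝ E] [CompleteSpace E]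
    (l : E → ℝ) (hlconv : ConvexOn ℝ Set.univ l) (hldiff : Differentiable ℝ l)
    (L : ℝ)
    (hLip : ∀ a b : E, ‖gradient l a - gradient l b‖ ≤ L * ‖a - b‖)
    (h : E → EReal)
    (hproper_bot : ∀ x : E, h x ≠ ⊥) (hproper_top : ∃ x : E, h x ≠ ⊤)
    (hclosed : LowerSemicontinuous h)
    (hconvex : ∀ x y : E, ∀ t : ℝ, 0 ≤ t → t ≤ 1 →
      h (t • x + (1 - t) • y) ≤ (t : EReal) * h x + ((1 - t : ℝ) : EReal) * h y)
    (Fn : E → EReal) (hFn : ∀ x : E, Fn x = (l x : EReal) + h x)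
    (M : ℝ) (hM : 0 < M) (hML : L ≤ M)
    (x T : E)
    (hT : ∀ y : E,
      h T + ((M / 2 * ‖T - (x - (1 / M) • gradient l x)‖ ^ 2 : ℝ) : EReal)
        ≤ h y + ((M / 2 * ‖y - (x - (1 / M) • gradient l x)‖ ^ 2 : ℝ) : EReal))
    (G : E) (hG : G = M • (x - T)) :
    ∀ y : E, h y ≠ ⊤ →
      Fn T ≤ Fn y + ((⟪G, x - y⟫ - 1 / (2 * M) * ‖G‖ ^ 2 : ℝ) : EReal) ∧
      Fn T ≤ Fn y + ((‖G‖ * ‖x - y‖ : ℝ) : EReal) :=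
  fundamental_prox_gradient_inequality_general l hlconv hldiff L hLip h hconvex Fn hFn M hM hML x T
    hT G hG
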